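/- arXiv:1603.05864 — 2 statements merged into one kernel-verified Lean document; each statement's English description precedes it below -/
import Mathlib

section
/- If μ is a probability measure on a locally compact abelian group G with independent powers, then the unit circle {z ∈ ℂ : |z| = 1} is contained in the spectrum σ(μ) of μ in M(G). -/
/-!
Suppose `|z| = 1` but `z - μ` has an inverse `b`. Since the powers `μ^(k+1)` are mutually
singular, they are carried by pairwise disjoint Borel sets `D k`, and the functional
`L ξ = ∑ z^(k+1) ξ(D k)` satisfies `L(μ^(n+1)) = z^(n+1)` and `|L(ρ ∗ μ^(n+1))| ≤ ρ(G)` for every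
finite positive `ρ`; as complex measures are combinations of positive ones, `L(ξ ∗ μ^(n+1))` is
bounded in `n` for every `ξ`. But `b (z - μ) = 1` forces `β n = L(b ∗ μ^(n+1))` to satisfy
`β (n+1) = z β n - z^(n+1)`, i.e. `β n = z^n (β 0 - n)`, which is unbounded.
-/

open MeasureTheory Filter Topology WeakDual

noncomputable section

variable {G : Type*} [CommGroup G] [TopologicalSpace G] [IsTopologicalGroup G]
  [MeasurableSpace G] [BorelSpace G]

/-- The Fourier–Stieltjes transform of a measure: `μ̂ (γ) = ∫ γ(-x) dμ(x)`. -/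
def FS (μ : Measure G) (γ : PontryaginDual G) : ℂ :=
  ∫ x, ((γ x⁻¹ : Circle) : ℂ) ∂μ

/-- Convolution of two measures on the (multiplicative) group `G`. -/
def mconv (μ ν : Measure G) : Measure G :=
  Measure.map (fun p : G × G => p.1 * p.2) (μ.prod ν)

/-- Convolution powers of a measure: `convPow μ 0 = δ₁`, `convPow μ (n+1) = μ ∗ convPow μ n`. -/
def convPow (μ : Measure G) : ℕ → Measure G
  | 0 => Measure.dirac 1
  | n + 1 => mconv μ (convPow μ n)

/-- `μ` has independent powers: all distinct convolution powers of `μ` are mutually singular. -/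
def HasIndependentPowers (μ : Measure G) : Prop :=
  ∀ m n : ℕ, 0 < m → 0 < n → m ≠ n → (convPow μ m).MutuallySingular (convPow μ n)

open Classical in
/-- A finite (positive) measure, viewed as a complex measure. -/
def toCM (μ : Measure G) : ComplexMeasure G :=
  if h : IsFiniteMeasure μ then
    (@Measure.toSignedMeasure G _ μ h).mapRange Complex.ofRealHom.toAddMonoidHom
      Complex.continuous_ofReal
  else 0

open Function

theorem mem_spectrum_of_apply_pow_eq_pow {A : Type*} [Ring A] [Algebra ℂ A] {a : A} {z : ℂ}
    (hz : 1 ≤ ‖z‖) (f : A →ₗ[ℂ] ℂ) (hpow : ∀ n, f (a ^ (n + 1)) = z ^ (n + 1))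
    (hbdd : ∀ x, ∃ C, ∀ n, ‖f (x * a ^ (n + 1))‖ ≤ C) : z ∈ spectrum ℂ a := by
  by_contra hz_res
  obtain ⟨b, hb⟩ := (spectrum.notMem_iff.1 hz_res).exists_left_inv
  set β : ℕ → ℂ := fun n => f (b * a ^ (n + 1))
  have hrec n : β (n + 1) = z * β n - z ^ (n + 1) := by
    have hba : b * a = z • b - 1 := by
      rw [Algebra.smul_def, Algebra.commutes, ← hb, mul_sub, sub_sub_cancel]
    have h : b * a ^ (n + 2) = z • (b * a ^ (n + 1)) - a ^ (n + 1) := by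
      rw [pow_succ' a (n + 1), ← mul_assoc, hba, sub_mul, smul_mul_assoc, one_mul]
    simp only [β, h, map_sub, map_smul, hpow, smul_eq_mul]
  have hβ n : β n = z ^ n * (β 0 - n) := by
    induction n with
    | zero => simp
    | succ n ih => rw [hrec, ih]; push_cast; ring
  obtain ⟨C, hC⟩ := hbdd b
  obtain ⟨n, hn⟩ := exists_nat_gt (C + ‖β 0‖)
  have hgrow : (n : ℝ) - ‖β 0‖ ≤ ‖β n‖ := calc
    (n : ℝ) - ‖β 0‖ ≤ ‖β 0 - n‖ := by
      simpa only [norm_sub_rev, Complex.norm_natCast] using norm_sub_norm_le (n : ℂ) (β 0)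
    _ ≤ ‖z‖ ^ n * ‖β 0 - n‖ := le_mul_of_one_le_left (norm_nonneg _) (one_le_pow₀ hz)
    _ = ‖β n‖ := by rw [hβ n, norm_mul, norm_pow]
  linarith [hC n]

theorem exists_forall_norm_apply_mul_le_of_span_eq_top {A ι : Type*} [Ring A] [Algebra ℂ A]
    (f : A →ₗ[ℂ] ℂ) (y : ι → A) {S : Set A} (hS : Submodule.span ℂ S = ⊤)
    (h : ∀ s ∈ S, ∃ C, ∀ i, ‖f (s * y i)‖ ≤ C) (x : A) : ∃ C, ∀ i, ‖f (x * y i)‖ ≤ C := by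
  have hx : x ∈ Submodule.span ℂ S := hS ▸ Submodule.mem_top
  induction hx using Submodule.span_induction with
  | mem s hs => exact h s hs
  | zero => exact ⟨0, fun i => by simp⟩
  | add u v _ _ hu hv =>
    obtain ⟨C, hC⟩ := hu
    obtain ⟨C', hC'⟩ := hv
    refine ⟨C + C', fun i => ?_⟩
    rw [add_mul, map_add]
    exact (norm_add_le _ _).trans (add_le_add (hC i) (hC' i))
  | smul c u _ hu =>
    obtain ⟨C, hC⟩ := hu
    refine ⟨‖c‖ * C, fun i => ?_⟩
    rw [smul_mul_assoc, map_smul, norm_smul]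
    exact mul_le_mul_of_nonneg_left (hC i) (norm_nonneg c)

theorem exists_pairwise_disjoint_measurableSet_of_pairwise_mutuallySingular
    {α ι : Type*} [MeasurableSpace α] [Countable ι] {ν : ι → Measure α}
    (h : Pairwise fun i j => ν i ⟂ₘ ν j) :
    ∃ D : ι → Set α, (∀ i, MeasurableSet (D i)) ∧ Pairwise (Disjoint on D) ∧
      ∀ i, ν i (D i)ᶜ = 0 := by
  have hE i : ∃ E, MeasurableSet E ∧ ν i Eᶜ = 0 ∧ ∀ j ≠ i, ν j E = 0 := by
    obtain ⟨s, hs, hνs, hsum⟩ :=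
      Measure.MutuallySingular.sum_right.2 fun j : {j // j ≠ i} => h j.2.symm
    refine ⟨sᶜ, hs.compl, by rwa [compl_compl], fun j hj => ?_⟩
    exact Measure.sum_apply_eq_zero.1 hsum ⟨j, hj⟩
  choose E hEm hEi hEj using hE
  refine ⟨fun i => E i \ ⋃ (j) (_ : j ≠ i), E j, fun i => ?_, fun i j hij => ?_, fun i => ?_⟩
  · exact (hEm i).diff (.iUnion fun j => .iUnion fun _ => hEm j)
  · exact Set.disjoint_left.2 fun x hxi hxj => hxj.2 (Set.mem_biUnion hij hxi.1)
  · rw [Set.compl_sdiff]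
    exact measure_union_null (measure_iUnion_null fun j => measure_iUnion_null fun hj =>
      hEj j i (Ne.symm hj)) (hEi i)

section measure

variable {α : Type*} [MeasurableSpace α]

theorem toCM_apply (ρ : Measure α) [h : IsFiniteMeasure ρ] {s : Set α} (hs : MeasurableSet s) :
    toCM ρ s = ρ.real s := by
  rw [toCM, dif_pos h, VectorMeasure.mapRange_apply,
    Measure.toSignedMeasure_apply_measurable hs]
  rfl

theorem span_toCM_eq_top :
    Submodule.span ℂ (Set.range fun ρ : FiniteMeasure α => toCM (ρ : Measure α)) = ⊤ := by
  set S := Submodule.span ℂ (Set.range fun ρ : FiniteMeasure α => toCM (ρ : Measure α))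
  set ofReal := VectorMeasure.mapRangeHom (α := α) Complex.ofRealHom.toAddMonoidHom
    Complex.continuous_ofReal
  have hofReal (s : SignedMeasure α) : ofReal s ∈ S := by
    have hmem (ρ : Measure α) [IsFiniteMeasure ρ] : ofReal ρ.toSignedMeasure ∈ S :=
      Submodule.subset_span ⟨⟨ρ, inferInstance⟩, dif_pos _⟩
    rw [← s.toSignedMeasure_toJordanDecomposition, JordanDecomposition.toSignedMeasure, map_sub]
    exact S.sub_mem (hmem _) (hmem _)
  have hξ (ξ : ComplexMeasure α) : ξ =
      ofReal (ComplexMeasure.re ξ) + Complex.I • ofReal (ComplexMeasure.im ξ) := by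
    ext i
    change ξ i = (ξ i).re + Complex.I * (ξ i).im
    rw [mul_comm, Complex.re_add_im]
  refine Submodule.eq_top_iff'.2 fun ξ => ?_
  rw [hξ ξ]
  exact S.add_mem (hofReal _) (S.smul_mem _ (hofReal _))

section weightedSum

variable {D : ℕ → Set α} {w : ℕ → ℂ}

theorem summable_weight_mul_apply (hD : ∀ k, MeasurableSet (D k))
    (hdisj : Pairwise (Disjoint on D)) (hw : ∀ k, ‖w k‖ ≤ 1) (ξ : ComplexMeasure α) :
    Summable fun k => w k * ξ (D k) := by
  refine .of_norm_bounded (summable_norm_iff.2 (ξ.m_iUnion hD hdisj).summable) fun k => ?_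
  rw [norm_mul]
  exact mul_le_of_le_one_left (norm_nonneg _) (hw k)

variable (hD : ∀ k, MeasurableSet (D k)) (hdisj : Pairwise (Disjoint on D)) (hw : ∀ k, ‖w k‖ ≤ 1)

def weightedSum : ComplexMeasure α →ₗ[ℂ] ℂ where
  toFun ξ := ∑' k, w k * ξ (D k)
  map_add' ξ η := by
    simp only [add_apply, mul_add]
    exact (summable_weight_mul_apply hD hdisj hw ξ).tsum_add
      (summable_weight_mul_apply hD hdisj hw η)
  map_smul' c ξ := by
    simp only [smul_apply, smul_eq_mul, RingHom.id_apply, ← tsum_mul_left]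
    simp only [mul_left_comm]

theorem weightedSum_apply (ξ : ComplexMeasure α) :
    weightedSum hD hdisj hw ξ = ∑' k, w k * ξ (D k) := rfl

theorem norm_weightedSum_toCM_le (ρ : Measure α) [IsFiniteMeasure ρ] :
    ‖weightedSum hD hdisj hw (toCM ρ)‖ ≤ ρ.real Set.univ := calc
  ‖weightedSum hD hdisj hw (toCM ρ)‖ ≤ ∑' k, ‖w k * toCM ρ (D k)‖ :=
    norm_tsum_le_tsum_norm (summable_norm_iff.2 (summable_weight_mul_apply hD hdisj hw _))
  _ ≤ ∑' k, ρ.real (D k) := by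
    refine Summable.tsum_le_tsum (fun k => ?_)
      (summable_norm_iff.2 (summable_weight_mul_apply hD hdisj hw _))
      (summable_measure_toReal hD hdisj)
    rw [norm_mul, toCM_apply _ (hD k), Complex.norm_real, Real.norm_of_nonneg measureReal_nonneg]
    exact mul_le_of_le_one_left measureReal_nonneg (hw k)
  _ = ρ.real (⋃ k, D k) := by
    simp only [measureReal_def]
    rw [measure_iUnion hdisj hD, ENNReal.tsum_toReal_eq fun _ => measure_ne_top _ _]
  _ ≤ ρ.real Set.univ := measureReal_mono (Set.subset_univ _)

theorem weightedSum_toCM_of_compl_eq_zero (ν : Measure α) [IsProbabilityMeasure ν] {n : ℕ}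
    (hν : ν (D n)ᶜ = 0) : weightedSum hD hdisj hw (toCM ν) = w n := by
  rw [weightedSum_apply, tsum_eq_single n fun k hk => ?_, toCM_apply _ (hD n), measureReal_def,
    (prob_compl_eq_zero_iff (hD n)).1 hν, ENNReal.toReal_one, Complex.ofReal_one, mul_one]
  rw [toCM_apply _ (hD k), measureReal_def,
    measure_mono_null (hdisj hk).subset_compl_right hν, ENNReal.toReal_zero, Complex.ofReal_zero,
    mul_zero]

end weightedSum

end measure

section convolution

variable {M : Type*} [CommGroup M] [MeasurableSpace M] [MeasurableMul₂ M]

theorem mconv_apply_univ (ρ ν : Measure M) [SFinite ν] :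
    mconv ρ ν Set.univ = ρ Set.univ * ν Set.univ := by
  rw [mconv, Measure.map_apply measurable_mul MeasurableSet.univ, Set.preimage_univ,
    ← Set.univ_prod_univ, Measure.prod_prod]

instance isFiniteMeasure_mconv (ρ ν : Measure M) [IsFiniteMeasure ρ] [IsFiniteMeasure ν] :
    IsFiniteMeasure (mconv ρ ν) :=
  ⟨by rw [mconv_apply_univ]; exact ENNReal.mul_lt_top (measure_lt_top ρ _) (measure_lt_top ν _)⟩

instance isProbabilityMeasure_convPow (μ : Measure M) [IsProbabilityMeasure μ] :
    ∀ n, IsProbabilityMeasure (convPow μ n)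
  | 0 => inferInstanceAs (IsProbabilityMeasure (Measure.dirac 1))
  | n + 1 =>
    have := isProbabilityMeasure_convPow μ n
    ⟨by rw [convPow, mconv_apply_univ, measure_univ, measure_univ, one_mul]⟩

theorem pow_toCM_convPow {A : Type*} [Semiring A] [Module ℂ A] (T : ComplexMeasure M ≃ₗ[ℂ] A)
    (hT_mul : ∀ (μ ν : Measure M), IsFiniteMeasure μ → IsFiniteMeasure ν →
      T (toCM (mconv μ ν)) = T (toCM μ) * T (toCM ν))
    (hT_one : T (toCM (Measure.dirac 1)) = 1) (μ : Measure M) [IsProbabilityMeasure μ] (n : ℕ) :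
    T (toCM μ) ^ n = T (toCM (convPow μ n)) := by
  induction n with
  | zero => rw [pow_zero, ← hT_one]; rfl
  | succ n ih => rw [pow_succ', ih, convPow, hT_mul _ _ inferInstance inferInstance]

end convolution

theorem circle_subset_spectrum_of_independentPowers_general [MeasurableMul₂ G]
    (A : Type*) [NormedCommRing A] [NormedAlgebra ℂ A]
    (T : ComplexMeasure G ≃ₗ[ℂ] A)
    (hT_mul : ∀ (μ ν : Measure G), IsFiniteMeasure μ → IsFiniteMeasure ν →
      T (toCM (mconv μ ν)) = T (toCM μ) * T (toCM ν))
    (hT_one : T (toCM (Measure.dirac 1)) = 1)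
    (μ : Measure G) [IsProbabilityMeasure μ]
    (hip : HasIndependentPowers μ) :
    Metric.sphere (0 : ℂ) 1 ⊆ spectrum ℂ (T (toCM μ)) := by
  intro z hz
  have hz1 : ‖z‖ = 1 := by simpa using hz
  have hpow := pow_toCM_convPow T hT_mul hT_one μ
  obtain ⟨D, hD, hdisj, hDμ⟩ :=
    exists_pairwise_disjoint_measurableSet_of_pairwise_mutuallySingular
      (ν := fun n => convPow μ (n + 1))
      fun m n hmn => hip _ _ m.succ_pos n.succ_pos (by simpa using hmn)
  set L := weightedSum hD hdisj (w := fun k => z ^ (k + 1)) (by simp [hz1])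
  refine mem_spectrum_of_apply_pow_eq_pow hz1.ge (L ∘ₗ T.symm.toLinearMap) (fun n => ?_) ?_
  · simp only [LinearMap.comp_apply, LinearEquiv.coe_coe, hpow, LinearEquiv.symm_apply_apply]
    exact weightedSum_toCM_of_compl_eq_zero _ _ _ _ (hDμ n)
  have hspan : Submodule.span ℂ (Set.range fun ρ : FiniteMeasure G => T (toCM ρ)) = ⊤ := by
    rw [Set.range_comp' T, Submodule.span_image_linearEquiv, span_toCM_eq_top, Submodule.map_top,
      LinearEquiv.range]
  refine exists_forall_norm_apply_mul_le_of_span_eq_top _ _ hspan ?_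
  rintro _ ⟨ρ, rfl⟩
  refine ⟨(ρ : Measure G).real Set.univ, fun n => ?_⟩
  rw [hpow, ← hT_mul _ _ inferInstance inferInstance, LinearMap.comp_apply, LinearEquiv.coe_coe,
    T.symm_apply_apply]
  refine (norm_weightedSum_toCM_le _ _ _ _).trans_eq ?_
  rw [measureReal_def, measureReal_def, mconv_apply_univ, measure_univ (μ := convPow μ (n + 1)),
    mul_one]

/-- For a probability measure with independent powers on a locally compact
abelian group, the unit circle is contained in its spectrum in the measure algebra `M(G)`
(represented here by `A`). -/
theorem circle_subset_spectrum_of_independentPowers [LocallyCompactSpace G] [MeasurableMul₂ G]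
    (A : Type*) [NormedCommRing A] [NormedAlgebra ℂ A] [CompleteSpace A]
    (T : ComplexMeasure G ≃ₗ[ℂ] A)
    (hT_mul : ∀ (μ ν : Measure G), IsFiniteMeasure μ → IsFiniteMeasure ν →
      T (toCM (mconv μ ν)) = T (toCM μ) * T (toCM ν))
    (hT_one : T (toCM (Measure.dirac 1)) = 1)
    (μ : Measure G) [IsProbabilityMeasure μ]
    (hip : HasIndependentPowers μ) :
    Metric.sphere (0 : ℂ) 1 ⊆ spectrum ℂ (T (toCM μ)) :=
  circle_subset_spectrum_of_independentPowers_general A T hT_mul hT_one μ hip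
end
end

section
/- Let A be a commutative unital Banach algebra whose Gelfand space Δ(A) equals its Shilov boundary ∂(A). If the spectrum in A is generated by a set S ⊂ Δ(A), then S is dense in Δ(A). In particular, if the spectrum in A is countably generated, then Δ(A) is separable. -/
open WeakDual Topology

noncomputable section

variable (A : Type*) [NormedCommRing A] [NormedAlgebra ℂ A] [CompleteSpace A]

/-- A *boundary* of a commutative unital Banach algebra: a closed subset of the Gelfand
space on which the Gelfand transform of every element attains its maximum modulus. -/
def IsBoundary (F : Set (characterSpace ℂ A)) : Prop :=
  IsClosed F ∧ ∀ a : A, ∃ φ ∈ F, ∀ ψ : characterSpace ℂ A, ‖ψ a‖ ≤ ‖φ a‖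

/-- The Shilov boundary `∂(A)`: the smallest closed boundary of `A`, i.e. the intersection
of all boundaries. -/
def shilovBoundary : Set (characterSpace ℂ A) :=
  ⋂₀ {F | IsBoundary A F}

/-- `S ⊆ Δ(A)` generates the spectrum in `A` if `σ(a) = closure {φ(a) : φ ∈ S}` for every
`a ∈ A`. -/
def GeneratesSpectrum (S : Set (characterSpace ℂ A)) : Prop :=
  ∀ a : A, spectrum ℂ a = closure {z : ℂ | ∃ φ ∈ S, φ a = z}

/-- The closure of a spectrum-generating set is a boundary. -/
theorem isBoundary_closure_of_generatesSpectrum (S : Set (characterSpace ℂ A))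
    (hS : GeneratesSpectrum A S) (hne : Nonempty (characterSpace ℂ A)) :
    IsBoundary A (closure S) := by
  refine ⟨isClosed_closure, fun a => ?_⟩
  have hcont : Continuous (fun ψ : characterSpace ℂ A => ψ a) :=
    (gelfandTransform ℂ A a).continuous
  -- the spectrum is the range of evaluation at `a`
  have hrange : spectrum ℂ a = Set.range (fun ψ : characterSpace ℂ A => ψ a) := by
    ext z
    simp [WeakDual.CharacterSpace.mem_spectrum_iff_exists, eq_comm]
  -- image of `closure S` contains the spectrum
  have himg : spectrum ℂ a ⊆ (fun ψ : characterSpace ℂ A => ψ a) '' closure S := by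
    have hcpt : IsCompact ((fun ψ : characterSpace ℂ A => ψ a) '' closure S) :=
      (isClosed_closure.isCompact).image hcont
    rw [hS a]
    refine closure_minimal ?_ hcpt.isClosed
    rintro z ⟨φ, hφ, rfl⟩
    exact ⟨φ, subset_closure hφ, rfl⟩
  -- pick a maximizer of the norm on the compact spectrum
  have hscpt : IsCompact (spectrum ℂ a) := by
    rw [hrange]; exact isCompact_range hcont
  have hsne : (spectrum ℂ a).Nonempty := by
    rw [hrange]; exact Set.range_nonempty _
  obtain ⟨z, hz, hzmax⟩ := hscpt.exists_isMaxOn hsne (continuous_norm.continuousOn)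
  obtain ⟨φ, hφ, hφz⟩ := himg hz
  refine ⟨φ, hφ, fun ψ => ?_⟩
  have : φ a = z := hφz
  rw [this]
  exact hzmax (by rw [hrange]; exact ⟨ψ, rfl⟩)

/-- Let `A` be a commutative unital Banach algebra whose Gelfand space
equals its Shilov boundary.  If `S ⊆ Δ(A)` generates the spectrum in `A`, then `S` is dense
in `Δ(A)`.  In particular, if the spectrum in `A` is countably generated, then `Δ(A)` is
separable. -/
theorem dense_of_generatesSpectrum (hA : shilovBoundary A = Set.univ) :
    (∀ S : Set (characterSpace ℂ A), GeneratesSpectrum A S → Dense S) ∧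
    (∀ S : Set (characterSpace ℂ A), GeneratesSpectrum A S → S.Countable →
      TopologicalSpace.SeparableSpace ↥(characterSpace ℂ A)) := by
  have key : ∀ S : Set (characterSpace ℂ A), GeneratesSpectrum A S → Dense S := by
    intro S hS
    by_cases hne : Nonempty (characterSpace ℂ A)
    · have hb := isBoundary_closure_of_generatesSpectrum A S hS hne
      have : shilovBoundary A ⊆ closure S := Set.sInter_subset_of_mem hb
      rw [hA] at this
      rw [dense_iff_closure_eq]
      exact Set.eq_univ_of_univ_subset this
    · rw [dense_iff_closure_eq]
      ext φ
      exact absurd ⟨φ⟩ hne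
  exact ⟨key, fun S hS hc => ⟨⟨S, hc, key S hS⟩⟩⟩
end
end
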